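/- (Theorem 3.3, second part) Let g : U → E be a differentiable function such that H_i(g(z)) = β_i·g(z) for all z ∈ U and all 1 ≤ i ≤ r. Then g satisfies ∂g/∂z_k = −(ℏ/2)·Σ_{j ≠ k} (z_k − z_j)^{−1}·κ_{kj}(g) for all k, if and only if the function u(z) := (Π_{1 ≤ i < j ≤ r} (z_i − z_j)^{ℏ(β_i−β_j)/2})·g(z) satisfies the dynamical system ∂u/∂z_k = −ℏ·Σ_{j ≠ k} (z_k − z_j)^{−1}·D̂_{kj}(u) for all k, where D̂_{kj} := D_{kj} if k < j and D̂_{kj} := D_{jk} if j < k. -/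

import Mathlib

/-!
With `F_{ij} = Σ_a x_{a,i} ∂_{a,j}` (so `H_i = F_{ii}`), the canonical anticommutation relations
give the `gl_r` relation `[F_{ij}, F_{ji}] = H_i - H_j`. Hence
`κ_{kj} = F_{kj} F_{jk} + F_{jk} F_{kj} = 2 D̂_{kj} ± (H_k - H_j)`, with `+` for `k < j`, and on the
`β`-weight space the correction is the scalar `±(β_k - β_j)`. The prefactor
`φ(z) = Π_{i<j} (z_i - z_j)^{ℏ(β_i-β_j)/2}` has logarithmic derivative
`∂_k log φ = (ℏ/2) Σ_{j≠k} ±(β_k - β_j) / (z_k - z_j)`, exactly the scalar part of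
`-(ℏ/2) Σ_{j≠k} (z_k - z_j)⁻¹ κ_{kj}`. Since `∂_k (φ g) = φ (∂_k g + (∂_k log φ) g)` and `φ ≠ 0`,
the two systems are equivalent.
-/

open Finset

section Polarization

variable {R α ι : Type*} [Ring R] [Fintype α] (x d : α → ι → R)

def polarization (i j : ι) : R := ∑ a, x a i * d a j

theorem sum_sum_eq_polarization_mul_add_mul (i j : ι) :
    ∑ a, ∑ b, (x a i * d a j * x b j * d b i + x b j * d b i * x a i * d a j) =
      polarization x d i j * polarization x d j i +
        polarization x d j i * polarization x d i j := by
  simp only [polarization, sum_mul_sum, sum_add_distrib]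
  rw [sum_comm (f := fun a b => x a j * d a i * (x b i * d b j))]
  simp only [mul_assoc]

variable [DecidableEq α] [DecidableEq ι]

theorem polarization_mul_polarization_swap
    (hxd : ∀ a i b j, x a i * d b j + d b j * x a i = if a = b ∧ i = j then 1 else 0) (i j : ι) :
    polarization x d i j * polarization x d j i =
      polarization x d i i - ∑ a, ∑ b, x a i * x b j * (d a j * d b i) := by
  have hdx : ∀ a b, d a j * x b j = (if b = a then 1 else 0) - x b j * d a j := fun a b => by
    rw [eq_sub_iff_add_eq', hxd b j a j]; simp
  simp only [polarization, sum_mul_sum, ← sum_sub_distrib]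
  refine sum_congr rfl fun a _ => ?_
  calc ∑ b, x a i * d a j * (x b j * d b i)
      = ∑ b, ((if b = a then x a i * d b i else 0) - x a i * x b j * (d a j * d b i)) :=
        sum_congr rfl fun b _ => by
          rw [mul_assoc, ← mul_assoc (d a j), hdx]
          split_ifs <;> noncomm_ring
    _ = x a i * d a i - ∑ b, x a i * x b j * (d a j * d b i) := by
      rw [sum_sub_distrib, sum_ite_eq', if_pos (mem_univ a)]

theorem polarization_commutator
    (hxx : ∀ a i b j, x a i * x b j + x b j * x a i = 0)
    (hdd : ∀ a i b j, d a i * d b j + d b j * d a i = 0)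
    (hxd : ∀ a i b j, x a i * d b j + d b j * x a i = if a = b ∧ i = j then 1 else 0) (i j : ι) :
    polarization x d i j * polarization x d j i - polarization x d j i * polarization x d i j =
      polarization x d i i - polarization x d j j := by
  have hquartic : ∑ a, ∑ b, x a j * x b i * (d a i * d b j) =
      ∑ a, ∑ b, x a i * x b j * (d a j * d b i) := by
    rw [sum_comm]
    refine sum_congr rfl fun a _ => sum_congr rfl fun b _ => ?_
    rw [eq_neg_of_add_eq_zero_right (hxx a i b j), eq_neg_of_add_eq_zero_right (hdd a j b i),
      neg_mul_neg]
  rw [polarization_mul_polarization_swap x d hxd, polarization_mul_polarization_swap x d hxd,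
    hquartic]
  abel

theorem polarization_anticommutator
    (hxx : ∀ a i b j, x a i * x b j + x b j * x a i = 0)
    (hdd : ∀ a i b j, d a i * d b j + d b j * d a i = 0)
    (hxd : ∀ a i b j, x a i * d b j + d b j * x a i = if a = b ∧ i = j then 1 else 0) (i j : ι) :
    polarization x d i j * polarization x d j i + polarization x d j i * polarization x d i j =
      2 • (polarization x d j i * polarization x d i j) +
        (polarization x d i i - polarization x d j j) := by
  rw [← polarization_commutator x d hxx hdd hxd]
  abel

end Polarization

theorem polarization_anticommutator_apply_of_weight {K M α ι : Type*} [Ring K] [AddCommGroup M]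
    [Module K M] [Fintype α] [DecidableEq α] [DecidableEq ι] {x d : α → ι → Module.End K M}
    (hxx : ∀ a i b j, x a i * x b j + x b j * x a i = 0)
    (hdd : ∀ a i b j, d a i * d b j + d b j * d a i = 0)
    (hxd : ∀ a i b j, x a i * d b j + d b j * x a i = if a = b ∧ i = j then 1 else 0)
    {β : ι → K} {v : M} (hv : ∀ i, polarization x d i i v = β i • v) (i j : ι) :
    (polarization x d i j * polarization x d j i + polarization x d j i * polarization x d i j) v =
      2 • (polarization x d j i * polarization x d i j) v + (β i - β j) • v := by
  rw [polarization_anticommutator x d hxx hdd hxd]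
  simp only [LinearMap.add_apply, LinearMap.sub_apply, LinearMap.smul_apply, hv, sub_smul]

theorem HasFDerivAt.finsetProd_of_eq_smul {ι 𝕜 E 𝔸 : Type*} [NontriviallyNormedField 𝕜]
    [NormedAddCommGroup E] [NormedSpace 𝕜 E] [NormedCommRing 𝔸] [NormedAlgebra 𝕜 𝔸]
    {s : Finset ι} {f : ι → E → 𝔸} {L : ι → E →L[𝕜] 𝔸} {x : E}
    (hf : ∀ i ∈ s, HasFDerivAt (f i) (f i x • L i) x) :
    HasFDerivAt (∏ i ∈ s, f i ·) ((∏ i ∈ s, f i x) • ∑ i ∈ s, L i) x := by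
  classical
  convert HasFDerivAt.finsetProd hf using 1
  rw [smul_sum]
  refine sum_congr rfl fun i hi => ?_
  rw [smul_smul, ← prod_erase_mul s _ hi]

theorem hasFDerivAt_ofReal_sub_cpow {ι : Type*} [Fintype ι] {z : ι → ℝ} {i j : ι}
    (hij : z j < z i) (c : ℂ) :
    HasFDerivAt (fun w : ι → ℝ => ((w i - w j : ℝ) : ℂ) ^ c)
      (((z i - z j : ℝ) : ℂ) ^ c • (c / (z i - z j : ℝ)) •
        Complex.ofRealCLM.comp
          ((ContinuousLinearMap.proj i : (ι → ℝ) →L[ℝ] ℝ) - ContinuousLinearMap.proj j)) z := by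
  have hpos : (0 : ℝ) < z i - z j := sub_pos.mpr hij
  have hne : ((z i - z j : ℝ) : ℂ) ≠ 0 := Complex.ofReal_ne_zero.mpr hpos.ne'
  have hlin := (Complex.ofRealCLM.comp
    ((ContinuousLinearMap.proj i : (ι → ℝ) →L[ℝ] ℝ) - ContinuousLinearMap.proj j)).hasFDerivAt
      (x := z)
  refine ((Complex.hasStrictDerivAt_cpow_const (c := c)
    (Complex.ofReal_mem_slitPlane.mpr hpos)).hasDerivAt.comp_hasFDerivAt z hlin).congr_fderiv ?_
  rw [smul_smul, Complex.cpow_sub _ _ hne, Complex.cpow_one]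
  congr 1
  field_simp

theorem hasFDerivAt_prod_ofReal_sub_cpow {ι : Type*} [Fintype ι] [LinearOrder ι] {z : ι → ℝ}
    (hz : ∀ i j, i < j → z j < z i) (c : ι → ι → ℂ) :
    HasFDerivAt (fun w : ι → ℝ => ∏ i, ∏ j ∈ univ.filter (fun j => i < j),
        ((w i - w j : ℝ) : ℂ) ^ c i j)
      ((∏ i, ∏ j ∈ univ.filter (fun j => i < j), ((z i - z j : ℝ) : ℂ) ^ c i j) •
        ∑ i, ∑ j ∈ univ.filter (fun j => i < j), (c i j / (z i - z j : ℝ)) •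
          Complex.ofRealCLM.comp
            ((ContinuousLinearMap.proj i : (ι → ℝ) →L[ℝ] ℝ) - ContinuousLinearMap.proj j)) z :=
  HasFDerivAt.finsetProd_of_eq_smul fun i _ => HasFDerivAt.finsetProd_of_eq_smul fun j hj =>
    hasFDerivAt_ofReal_sub_cpow (hz i j (mem_filter.1 hj).2) _

theorem prod_ofReal_sub_cpow_ne_zero {ι : Type*} [Fintype ι] [LinearOrder ι] {z : ι → ℝ}
    (hz : ∀ i j, i < j → z j < z i) (c : ι → ι → ℂ) :
    ∏ i, ∏ j ∈ univ.filter (fun j => i < j), ((z i - z j : ℝ) : ℂ) ^ c i j ≠ 0 :=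
  prod_ne_zero_iff.mpr fun i _ => prod_ne_zero_iff.mpr fun j hj =>
    Complex.cpow_ne_zero_iff.mpr <| Or.inl <|
      Complex.ofReal_ne_zero.mpr (sub_pos.mpr (hz i j (mem_filter.1 hj).2)).ne'

theorem sum_filter_lt_smul_ofReal_proj_sub_apply_single {ι : Type*} [Fintype ι] [LinearOrder ι]
    (a : ι → ι → ℂ) (k : ι) :
    (∑ i, ∑ j ∈ univ.filter (fun j => i < j), a i j • Complex.ofRealCLM.comp
        ((ContinuousLinearMap.proj i : (ι → ℝ) →L[ℝ] ℝ) - ContinuousLinearMap.proj j))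
      (Pi.single k 1) = ∑ j ∈ univ.erase k, if k < j then a k j else -a j k := by
  simp only [_root_.sum_apply, _root_.smul_apply, ContinuousLinearMap.comp_apply, _root_.sub_apply,
    ContinuousLinearMap.proj_apply, Pi.single_apply, Complex.ofRealCLM_apply, Complex.ofReal_sub,
    apply_ite Complex.ofReal, Complex.ofReal_one, Complex.ofReal_zero, smul_eq_mul, mul_sub,
    sum_sub_distrib]
  simp only [mul_ite, mul_one, mul_zero, sum_ite_eq', sum_filter, ← ite_and, mem_filter, mem_univ,
    true_and]
  rw [sum_comm]
  simp only [and_comm (b := _ = k), ite_and, sum_ite_eq', mem_univ, if_true]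
  rw [← sum_erase_add _ _ (mem_univ k), ← sum_erase_add _ _ (mem_univ k), if_neg (lt_irrefl k),
    add_zero, add_zero, ← sum_sub_distrib]
  refine sum_congr rfl fun j hj => ?_
  rcases lt_or_gt_of_ne (ne_of_mem_erase hj) with h | h
  · simp [h, h.not_gt]
  · simp [h, h.not_gt]

theorem eq_sub_smul_iff_smul_add_mul_smul_eq {K M : Type*} [Field K] [AddCommGroup M] [Module K M]
    {c : K} (hc : c ≠ 0) {a b v : M} {s : K} :
    a = b - s • v ↔ c • a + (c * s) • v = c • b := by
  rw [mul_smul, ← smul_add, smul_right_inj hc, eq_sub_iff_add_eq]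

theorem theorem3_3_second_general (t r : ℕ)
    (E : Type*) [NormedAddCommGroup E] [NormedSpace ℂ E]
    (x d : Fin t → Fin r → Module.End ℂ E)
    (hxx : ∀ a i b j, x a i * x b j + x b j * x a i = 0)
    (hdd : ∀ a i b j, d a i * d b j + d b j * d a i = 0)
    (hxd : ∀ a i b j, x a i * d b j + d b j * x a i =
      if a = b ∧ i = j then 1 else 0)
    (κ : Fin r → Fin r → Module.End ℂ E)
    (hκ : ∀ i j, κ i j = ∑ a : Fin t, ∑ b : Fin t,
      (x a i * d a j * x b j * d b i + x b j * d b i * x a i * d a j))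
    (H : Fin r → Module.End ℂ E)
    (hH : ∀ i, H i = ∑ a : Fin t, x a i * d a i)
    (F : Fin r → Fin r → Module.End ℂ E)
    (hF : ∀ i j, F i j = ∑ a : Fin t, x a i * d a j)
    (Dhat : Fin r → Fin r → Module.End ℂ E)
    (hDhat : ∀ k j, Dhat k j = if k < j then F j k * F k j else F k j * F j k)
    (ℏ : ℂ) (β : Fin r → ℂ)
    (U : Set (Fin r → ℝ)) (hU : U = {z | ∀ i j : Fin r, i < j → z j < z i})
    (g : (Fin r → ℝ) → E)
    (hgdiff : ∀ z ∈ U, DifferentiableAt ℝ g z)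
    (hgwt : ∀ z ∈ U, ∀ i, H i (g z) = β i • g z)
    (u : (Fin r → ℝ) → E)
    (hu : ∀ z, u z =
      (∏ i : Fin r, ∏ j ∈ Finset.univ.filter (fun j => i < j),
        ((z i - z j : ℝ) : ℂ) ^ (ℏ * (β i - β j) / 2)) • g z) :
    (∀ z ∈ U, ∀ k : Fin r, fderiv ℝ g z (Pi.single k 1)
        = (-(ℏ / 2)) • ∑ j ∈ Finset.univ.erase k,
            ((z k - z j : ℝ) : ℂ)⁻¹ • κ k j (g z))
    ↔ (∀ z ∈ U, ∀ k : Fin r, fderiv ℝ u z (Pi.single k 1)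
        = (-ℏ) • ∑ j ∈ Finset.univ.erase k,
            ((z k - z j : ℝ) : ℂ)⁻¹ • Dhat k j (u z)) := by
  subst hU
  obtain rfl : u = (fun w : Fin r → ℝ => ∏ i, ∏ j ∈ univ.filter (fun j => i < j),
      ((w i - w j : ℝ) : ℂ) ^ (ℏ * (β i - β j) / 2)) • g := funext hu
  refine forall₂_congr fun z hz => forall_congr' fun k => ?_
  have hwt : ∀ i, polarization x d i i (g z) = β i • g z := fun i => by
    rw [← hgwt z hz i, hH]; rfl
  have hκg : ∀ j, κ k j (g z) =
      2 • Dhat k j (g z) + (if k < j then β k - β j else β j - β k) • g z := by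
    intro j
    rw [hκ, sum_sum_eq_polarization_mul_add_mul, hDhat, show F = polarization x d from funext₂ hF]
    split_ifs
    · exact polarization_anticommutator_apply_of_weight hxx hdd hxd hwt k j
    · rw [add_comm]
      exact polarization_anticommutator_apply_of_weight hxx hdd hxd hwt j k
  have hderiv := (hasFDerivAt_prod_ofReal_sub_cpow hz (fun i j => ℏ * (β i - β j) / 2)).smul
    (hgdiff z hz).hasFDerivAt
  rw [hderiv.fderiv]
  simp only [add_apply, smul_apply, ContinuousLinearMap.smulRight_apply, Pi.smul_apply', map_smul,
    sum_filter_lt_smul_ofReal_proj_sub_apply_single, smul_eq_mul]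
  set φz := ∏ i, ∏ j ∈ univ.filter (fun j => i < j), ((z i - z j : ℝ) : ℂ) ^ (ℏ * (β i - β j) / 2)
  simp only [smul_comm _ φz, ← smul_sum]
  rw [← eq_sub_smul_iff_smul_add_mul_smul_eq (prod_ofReal_sub_cpow_ne_zero hz _)]
  refine Eq.congr_right ?_
  rw [sum_smul, smul_sum, smul_sum, ← sum_sub_distrib]
  refine sum_congr rfl fun j _ => ?_
  rw [hκg]
  split_ifs
  · module
  · rw [← neg_sub (z k), Complex.ofReal_neg, div_neg, neg_neg]
    module

/-- **Theorem 3.3, second part.**  Under the CAR setup, a differentiable function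
`g : U → E` in the `β`-weight space satisfies
`∂g/∂z_k = -(ℏ/2) Σ_{j≠k} (z_k - z_j)⁻¹ κ_{kj} g` iff
`u(z) = (Π_{i<j} (z_i - z_j)^{ℏ(β_i-β_j)/2}) g(z)` satisfies the dynamical system
`∂u/∂z_k = -ℏ Σ_{j≠k} (z_k - z_j)⁻¹ D̂_{kj} u`, where `D̂_{kj} = D_{kj}` if `k < j`
and `D̂_{kj} = D_{jk}` otherwise, with `D_{ij} = F_{ji} ∘ F_{ij}` for `i < j`. -/
theorem theorem3_3_second (t r : ℕ) (ht : 0 < t) (hr : 0 < r)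
    (E : Type*) [NormedAddCommGroup E] [NormedSpace ℂ E]
    (x d : Fin t → Fin r → Module.End ℂ E)
    (hxx : ∀ a i b j, x a i * x b j + x b j * x a i = 0)
    (hdd : ∀ a i b j, d a i * d b j + d b j * d a i = 0)
    (hxd : ∀ a i b j, x a i * d b j + d b j * x a i =
      if a = b ∧ i = j then 1 else 0)
    (κ : Fin r → Fin r → Module.End ℂ E)
    (hκ : ∀ i j, κ i j = ∑ a : Fin t, ∑ b : Fin t,
      (x a i * d a j * x b j * d b i + x b j * d b i * x a i * d a j))
    (H : Fin r → Module.End ℂ E)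
    (hH : ∀ i, H i = ∑ a : Fin t, x a i * d a i)
    (F : Fin r → Fin r → Module.End ℂ E)
    (hF : ∀ i j, F i j = ∑ a : Fin t, x a i * d a j)
    (Dhat : Fin r → Fin r → Module.End ℂ E)
    (hDhat : ∀ k j, Dhat k j = if k < j then F j k * F k j else F k j * F j k)
    (ℏ : ℂ) (β : Fin r → ℂ)
    (U : Set (Fin r → ℝ)) (hU : U = {z | ∀ i j : Fin r, i < j → z j < z i})
    (g : (Fin r → ℝ) → E)
    (hgdiff : ∀ z ∈ U, DifferentiableAt ℝ g z)
    (hgwt : ∀ z ∈ U, ∀ i, H i (g z) = β i • g z)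
    (u : (Fin r → ℝ) → E)
    (hu : ∀ z, u z =
      (∏ i : Fin r, ∏ j ∈ Finset.univ.filter (fun j => i < j),
        ((z i - z j : ℝ) : ℂ) ^ (ℏ * (β i - β j) / 2)) • g z) :
    (∀ z ∈ U, ∀ k : Fin r, fderiv ℝ g z (Pi.single k 1)
        = (-(ℏ / 2)) • ∑ j ∈ Finset.univ.erase k,
            ((z k - z j : ℝ) : ℂ)⁻¹ • κ k j (g z))
    ↔ (∀ z ∈ U, ∀ k : Fin r, fderiv ℝ u z (Pi.single k 1)
        = (-ℏ) • ∑ j ∈ Finset.univ.erase k,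
            ((z k - z j : ℝ) : ℂ)⁻¹ • Dhat k j (u z)) :=
  theorem3_3_second_general t r E x d hxx hdd hxd κ hκ H hH F hF Dhat hDhat ℏ β U hU g hgdiff hgwt u
    hu
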